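/- arXiv:1809.03711 — 2 statements merged into one kernel-verified Lean document; each statement's English description precedes it below -/
import Mathlib

section
/- Let q be an odd prime, n = q+1, and ε = e^{2πi/(q+1)}, X₁ = (ε^q, ε^{q-1}, …, ε, 1) ∈ ℂ^{q+1}. Then the elementary symmetric polynomial P_{q+1} does not belong to the subalgebra of ℂ[x₁,…,x_{q+1}] generated by P₂, P₃, …, P_q. In particular, P_{q+1} evaluated at X₁ is nonzero while every element of the subalgebra generated by P₂,…,P_q with zero constant term vanishes at X₁. -/
/-!
Since `ε` is a primitive `(q+1)`-th root of unity, the coordinates of `X₁` are exactly the roots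
of `X^(q+1) - 1`. By Vieta's formulas `P_j(X₁) = 0` for `0 < j ≤ q`, while `P_{q+1}(X₁) = ±1`.
Evaluation at `X₁` and evaluation at `0` are algebra homomorphisms that agree on the generators
`P₂, …, P_q`, hence on the whole subalgebra they generate. As `P_{q+1}` has no constant term but
does not vanish at `X₁`, it lies outside that subalgebra.
-/

namespace MvPolynomial

variable {σ R : Type*}

theorem eval_eq_constantCoeff_of_mem_adjoin [CommSemiring R] {S : Set (MvPolynomial σ R)}
    {x : σ → R} (hS : ∀ p ∈ S, eval x p = constantCoeff p) {f : MvPolynomial σ R}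
    (hf : f ∈ Algebra.adjoin R S) : eval x f = constantCoeff f := by
  rw [← eval_zero]
  refine AlgHom.adjoin_le_equalizer (aeval x) (aeval 0) (fun p hp => ?_) hf
  change eval x p = eval 0 p
  rw [eval_zero, hS p hp]

theorem constantCoeff_esymm [CommSemiring R] [Fintype σ] {j : ℕ} (hj : j ≠ 0) :
    constantCoeff (esymm σ R j) = 0 := by
  rw [esymm, map_sum]
  refine Finset.sum_eq_zero fun t ht => ?_
  obtain ⟨i, hi⟩ := Finset.card_pos.mp <| (Finset.mem_powersetCard.mp ht).2 ▸ Nat.pos_of_ne_zero hj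
  rw [map_prod]
  exact Finset.prod_eq_zero hi (constantCoeff_X R i)

theorem eval_esymm_eq_neg_one_pow_mul_coeff [CommRing R] [Fintype σ] {x : σ → R}
    {p : Polynomial R} (hp : ∏ i, (Polynomial.X - Polynomial.C (x i)) = p) {j : ℕ}
    (hj : j ≤ Fintype.card σ) :
    eval x (esymm σ R j) = (-1) ^ j * p.coeff (Fintype.card σ - j) := by
  have hcard : Multiset.card (Finset.univ.val.map x) = Fintype.card σ := by simp
  have hvieta :=
    Multiset.prod_X_sub_C_coeff (Finset.univ.val.map x) (k := Fintype.card σ - j) (by omega)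
  rw [Multiset.map_map, Function.comp_def, hcard, Nat.sub_sub_self hj] at hvieta
  rw [← hp, Finset.prod_eq_multiset_prod, hvieta, ← mul_assoc, ← pow_add,
    Even.neg_one_pow ⟨j, rfl⟩, one_mul]
  exact aeval_esymm_eq_multiset_esymm σ R j x

variable [CommRing R] [Fintype σ] {x : σ → R}

theorem eval_esymm_eq_zero_of_prod_eq_X_pow_sub_one
    (hx : ∏ i, (Polynomial.X - Polynomial.C (x i)) = Polynomial.X ^ Fintype.card σ - 1)
    {j : ℕ} (hj₀ : j ≠ 0) (hj : j < Fintype.card σ) : eval x (esymm σ R j) = 0 := by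
  rw [eval_esymm_eq_neg_one_pow_mul_coeff hx hj.le, Polynomial.coeff_sub,
    Polynomial.coeff_X_pow, Polynomial.coeff_one, if_neg (by omega), if_neg (by omega), sub_zero,
    mul_zero]

theorem eval_esymm_card_of_prod_eq_X_pow_sub_one [Nonempty σ]
    (hx : ∏ i, (Polynomial.X - Polynomial.C (x i)) = Polynomial.X ^ Fintype.card σ - 1) :
    eval x (esymm σ R (Fintype.card σ)) = -(-1) ^ Fintype.card σ := by
  rw [eval_esymm_eq_neg_one_pow_mul_coeff hx le_rfl, Nat.sub_self, Polynomial.coeff_sub,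
    Polynomial.coeff_X_pow, if_neg Fintype.card_ne_zero.symm, Polynomial.coeff_one_zero, zero_sub,
    mul_neg_one]

end MvPolynomial

open Polynomial in
theorem IsPrimitiveRoot.prod_fin_X_sub_C_pow_sub_eq_X_pow_sub_one {R : Type*} [CommRing R]
    [IsDomain R] {ζ : R} {n : ℕ} (hζ : IsPrimitiveRoot ζ (n + 1)) :
    ∏ i : Fin (n + 1), (X - C (ζ ^ (n - i : ℕ))) = X ^ (n + 1) - 1 := by
  rw [Fin.prod_univ_eq_prod_range (fun i => X - C (ζ ^ (n - i))) (n + 1)]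
  have hreflect := Finset.prod_range_reflect (fun i => X - C (ζ ^ i)) (n + 1)
  rw [Nat.add_sub_cancel] at hreflect
  rw [hreflect]
  simpa using (X_pow_sub_C_eq_prod hζ n.succ_pos (one_pow _)).symm

open Complex MvPolynomial

theorem stmt_8_general (q : ℕ)
    (ε : ℂ) (hε : ε = Complex.exp (2 * Real.pi * Complex.I / (q + 1)))
    (X₁ : Fin (q + 1) → ℂ) (hX : ∀ i : Fin (q + 1), X₁ i = ε ^ (q - (i : ℕ))) :
    MvPolynomial.esymm (Fin (q + 1)) ℂ (q + 1) ∉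
      Algebra.adjoin ℂ {P : MvPolynomial (Fin (q + 1)) ℂ |
        ∃ j, 2 ≤ j ∧ j ≤ q ∧ P = MvPolynomial.esymm (Fin (q + 1)) ℂ j} ∧
    MvPolynomial.eval X₁ (MvPolynomial.esymm (Fin (q + 1)) ℂ (q + 1)) ≠ 0 ∧
    ∀ f ∈ Algebra.adjoin ℂ {P : MvPolynomial (Fin (q + 1)) ℂ |
        ∃ j, 2 ≤ j ∧ j ≤ q ∧ P = MvPolynomial.esymm (Fin (q + 1)) ℂ j},
      MvPolynomial.coeff 0 f = 0 → MvPolynomial.eval X₁ f = 0 := by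
  have hprim : IsPrimitiveRoot ε (q + 1) := by
    simpa [hε] using Complex.isPrimitiveRoot_exp (q + 1) q.succ_ne_zero
  have hroots : ∏ i, (Polynomial.X - Polynomial.C (X₁ i)) =
      Polynomial.X ^ Fintype.card (Fin (q + 1)) - 1 := by
    simpa only [hX, Fintype.card_fin] using hprim.prod_fin_X_sub_C_pow_sub_eq_X_pow_sub_one
  have hval : eval X₁ (esymm (Fin (q + 1)) ℂ (q + 1)) ≠ 0 := by
    have hcard := eval_esymm_card_of_prod_eq_X_pow_sub_one hroots
    rw [Fintype.card_fin] at hcard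
    simp [hcard]
  have hvanish : ∀ f ∈ Algebra.adjoin ℂ {P : MvPolynomial (Fin (q + 1)) ℂ |
      ∃ j, 2 ≤ j ∧ j ≤ q ∧ P = MvPolynomial.esymm (Fin (q + 1)) ℂ j},
      eval X₁ f = constantCoeff f := by
    refine fun f => eval_eq_constantCoeff_of_mem_adjoin ?_
    rintro _ ⟨j, hj₂, hjq, rfl⟩
    have hjlt : j < Fintype.card (Fin (q + 1)) := by rw [Fintype.card_fin]; omega
    rw [eval_esymm_eq_zero_of_prod_eq_X_pow_sub_one hroots (by omega) hjlt,
      constantCoeff_esymm (by omega)]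
  refine ⟨fun hmem => hval ?_, hval, fun f hf hf₀ => ?_⟩
  · rw [hvanish _ hmem, constantCoeff_esymm q.succ_ne_zero]
  · rw [hvanish f hf, constantCoeff_eq, hf₀]

theorem stmt_8 (q : ℕ) (hq : q.Prime) (hodd : Odd q)
    (ε : ℂ) (hε : ε = Complex.exp (2 * Real.pi * Complex.I / (q + 1)))
    (X₁ : Fin (q + 1) → ℂ) (hX : ∀ i : Fin (q + 1), X₁ i = ε ^ (q - (i : ℕ))) :
    MvPolynomial.esymm (Fin (q + 1)) ℂ (q + 1) ∉
      Algebra.adjoin ℂ {P : MvPolynomial (Fin (q + 1)) ℂ |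
        ∃ j, 2 ≤ j ∧ j ≤ q ∧ P = MvPolynomial.esymm (Fin (q + 1)) ℂ j} ∧
    MvPolynomial.eval X₁ (MvPolynomial.esymm (Fin (q + 1)) ℂ (q + 1)) ≠ 0 ∧
    ∀ f ∈ Algebra.adjoin ℂ {P : MvPolynomial (Fin (q + 1)) ℂ |
        ∃ j, 2 ≤ j ∧ j ≤ q ∧ P = MvPolynomial.esymm (Fin (q + 1)) ℂ j},
      MvPolynomial.coeff 0 f = 0 → MvPolynomial.eval X₁ f = 0 :=
  stmt_8_general q ε hε X₁ hX
end

section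
/- Let ε = e^{2πi/12} and X₁ = (ε^{11}, ε^{10}, …, ε, 1) ∈ ℂ^{12}. Then P₅(X₁) = 0, P₂(X₁) = 0, and P₃(X₁) = 0; moreover there exists a permutation w of the 12 coordinates such that w(X₁) has zero coordinate-sum on each of the three blocks {1,…,4}, {5,…,8}, {9,…,12}, and the restriction p₅ of P₅ to the subspace of ℂ^{12} of vectors with zero sum on each of these blocks does not lie in the subalgebra generated by the restrictions p₂ and p₃. -/
open Complex MvPolynomial

/-- Membership in the complexified Cartan subalgebra of su(4)×su(4)×su(4) ⊂ su(12):
zero coordinate-sum on each of the blocks {1,…,4}, {5,…,8}, {9,…,12}. -/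
def blockTraceZero (x : Fin 12 → ℂ) : Prop :=
  ∀ b : Fin 3, ∑ i : Fin 4, x ⟨(b : ℕ) * 4 + (i : ℕ), by omega⟩ = 0

/-- The restriction of the j-th elementary symmetric polynomial (in 12 variables)
to the block-trace-zero subspace, as a function. -/
noncomputable def pRes (j : ℕ) : {x : Fin 12 → ℂ // blockTraceZero x} → ℂ :=
  fun x => MvPolynomial.eval x.1 (MvPolynomial.esymm (Fin 12) ℂ j)

/-!
The coordinates of `X₁` are all the 12th roots of unity, so `∏ (T - xᵢ) = T¹² - 1` and every
`P_j` with `0 < j < 12` vanishes at `X₁`; grouping the roots as `ε^b · {1, i, -1, -i}` gives a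
permutation with zero block sums. For the non-membership, the block-trace-zero points
`(-4, 0, 2, 2 | 0 | 0)` and `(-3, 1, 1, 1 | -3, 1, 1, 1 | 0)` have characteristic polynomials
`T⁹ (T³ - 12T + 16)` and `T⁴ (T⁴ - 6T² + 8T - 3)²`: both give `p₂ = -12` and `p₃ = -16`, but
`p₅` is `0` at the first and `96` at the second, while everything in the algebra generated by
`p₂` and `p₃` takes equal values at the two points.
-/

theorem MvPolynomial.eval_esymm_eq_coeff_prod_X_sub_C {σ R : Type*} [Fintype σ] [CommRing R]
    (v : σ → R) {j : ℕ} (hj : j ≤ Fintype.card σ) :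
    eval v (esymm σ R j) =
      (-1) ^ j * (∏ i, (Polynomial.X - Polynomial.C (v i))).coeff (Fintype.card σ - j) := by
  have hcoeff := (Finset.univ.val.map v).prod_X_sub_C_coeff
    (k := Fintype.card σ - j) (by simp)
  rw [Multiset.card_map, Finset.card_val, Finset.card_univ, Nat.sub_sub_self hj,
    Multiset.map_map, ← Finset.prod_eq_multiset_prod] at hcoeff
  simp only [Function.comp_apply] at hcoeff
  rw [hcoeff, ← mul_assoc, ← mul_pow, neg_one_mul, neg_neg, one_pow, one_mul,
    ← aeval_eq_eval, aeval_esymm_eq_multiset_esymm]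

theorem Algebra.apply_eq_apply_of_mem_adjoin {α R A : Type*} [CommSemiring R] [Semiring A]
    [Algebra R A] {s : Set (α → A)} {x y : α} (h : ∀ g ∈ s, g x = g y) {f : α → A}
    (hf : f ∈ Algebra.adjoin R s) : f x = f y :=
  (AlgHom.eqOn_adjoin_iff (φ := Pi.evalAlgHom R (fun _ => A) x)
    (ψ := Pi.evalAlgHom R (fun _ => A) y)).2 h hf

namespace IsPrimitiveRoot

variable {R : Type*} [CommRing R] [IsDomain R] {ζ : R} {n : ℕ}

theorem prod_X_sub_C_pow_perm (hζ : IsPrimitiveRoot ζ n) (hn : 0 < n) (e : Equiv.Perm (Fin n)) :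
    ∏ i, (Polynomial.X - Polynomial.C (ζ ^ (e i : ℕ))) = Polynomial.X ^ n - 1 := by
  rw [Equiv.prod_comp e (fun i : Fin n => Polynomial.X - Polynomial.C (ζ ^ (i : ℕ))),
    Fin.prod_univ_eq_prod_range (fun i => Polynomial.X - Polynomial.C (ζ ^ i)),
    ← Polynomial.C_1, X_pow_sub_C_eq_prod hζ hn (one_pow n)]
  simp_rw [mul_one]

theorem eval_esymm_pow_perm_eq_zero (hζ : IsPrimitiveRoot ζ n) (e : Equiv.Perm (Fin n))
    {j : ℕ} (hj₀ : 0 < j) (hjn : j < n) :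
    eval (fun i => ζ ^ (e i : ℕ)) (esymm (Fin n) R j) = 0 := by
  rw [eval_esymm_eq_coeff_prod_X_sub_C _ (by simpa using hjn.le),
    hζ.prod_X_sub_C_pow_perm (by omega), Fintype.card_fin]
  simp [Polynomial.coeff_X_pow, Polynomial.coeff_one, show n - j ≠ n by omega,
    show n - j ≠ 0 by omega]

end IsPrimitiveRoot

/-- Sends slot `k` of block `b` to the index `11 - (b + 3k)`. -/
def blockPerm : Equiv.Perm (Fin 12) where
  toFun i := ⟨11 - 3 * (i % 4) - i / 4, by omega⟩
  invFun j := ⟨4 * ((11 - j) % 3) + (11 - j) / 3, by omega⟩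
  left_inv := by decide
  right_inv := by decide

theorem blockTraceZero_pow_blockPerm {ε : ℂ} (hε : IsPrimitiveRoot ε 12) :
    blockTraceZero (fun i => ε ^ (11 - (blockPerm i : ℕ))) := by
  intro b
  have hexp (k : Fin 4) : 11 - (blockPerm ⟨b * 4 + k, by omega⟩ : ℕ) = b + 3 * k := by
    simp only [blockPerm, Equiv.coe_fn_mk]
    omega
  have hε3 : IsPrimitiveRoot (ε ^ 3) 4 := hε.pow_of_dvd (by norm_num) (by norm_num)
  simp_rw [hexp, pow_add, pow_mul, ← Finset.mul_sum,
    Fin.sum_univ_eq_sum_range (fun k => (ε ^ 3) ^ k), hε3.geom_sum_eq_zero (by norm_num),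
    mul_zero]

def sepA : Fin 12 → ℂ := ![-4, 0, 2, 2, 0, 0, 0, 0, 0, 0, 0, 0]

def sepB : Fin 12 → ℂ := ![-3, 1, 1, 1, -3, 1, 1, 1, 0, 0, 0, 0]

theorem blockTraceZero_sepA : blockTraceZero sepA := by
  intro b; fin_cases b <;> norm_num [Fin.sum_univ_four, sepA]

theorem blockTraceZero_sepB : blockTraceZero sepB := by
  intro b; fin_cases b <;> norm_num [Fin.sum_univ_four, sepB]

theorem prod_X_sub_C_sepA : ∏ i, (Polynomial.X - Polynomial.C (sepA i)) =
    Polynomial.X ^ 12 - 12 * Polynomial.X ^ 10 + 16 * Polynomial.X ^ 9 := by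
  simp [Fin.prod_univ_succ, sepA, map_ofNat]
  ring

theorem prod_X_sub_C_sepB : ∏ i, (Polynomial.X - Polynomial.C (sepB i)) =
    Polynomial.X ^ 12 - 12 * Polynomial.X ^ 10 + 16 * Polynomial.X ^ 9 + 30 * Polynomial.X ^ 8
      - 96 * Polynomial.X ^ 7 + 100 * Polynomial.X ^ 6 - 48 * Polynomial.X ^ 5
      + 9 * Polynomial.X ^ 4 := by
  simp [Fin.prod_univ_succ, sepB, map_ofNat]
  ring

theorem eval_esymm_two_sepA_eq_sepB :
    eval sepA (esymm (Fin 12) ℂ 2) = eval sepB (esymm (Fin 12) ℂ 2) := by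
  simp only [eval_esymm_eq_coeff_prod_X_sub_C _ (show 2 ≤ Fintype.card (Fin 12) by simp),
    prod_X_sub_C_sepA, prod_X_sub_C_sepB]
  norm_num

theorem eval_esymm_three_sepA_eq_sepB :
    eval sepA (esymm (Fin 12) ℂ 3) = eval sepB (esymm (Fin 12) ℂ 3) := by
  simp only [eval_esymm_eq_coeff_prod_X_sub_C _ (show 3 ≤ Fintype.card (Fin 12) by simp),
    prod_X_sub_C_sepA, prod_X_sub_C_sepB]
  norm_num

theorem eval_esymm_five_sepA_ne_sepB :
    eval sepA (esymm (Fin 12) ℂ 5) ≠ eval sepB (esymm (Fin 12) ℂ 5) := by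
  simp only [eval_esymm_eq_coeff_prod_X_sub_C _ (show 5 ≤ Fintype.card (Fin 12) by simp),
    prod_X_sub_C_sepA, prod_X_sub_C_sepB]
  norm_num

theorem stmt_14 (ε : ℂ) (hε : ε = Complex.exp (2 * Real.pi * Complex.I / 12))
    (X₁ : Fin 12 → ℂ) (hX : ∀ i : Fin 12, X₁ i = ε ^ (11 - (i : ℕ))) :
    MvPolynomial.eval X₁ (MvPolynomial.esymm (Fin 12) ℂ 5) = 0 ∧
    MvPolynomial.eval X₁ (MvPolynomial.esymm (Fin 12) ℂ 2) = 0 ∧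
    MvPolynomial.eval X₁ (MvPolynomial.esymm (Fin 12) ℂ 3) = 0 ∧
    (∃ w : Equiv.Perm (Fin 12), blockTraceZero (fun i => X₁ (w i))) ∧
    pRes 5 ∉ Algebra.adjoin ℂ {pRes 2, pRes 3} := by
  have hprim : IsPrimitiveRoot ε 12 := by
    simpa [hε] using Complex.isPrimitiveRoot_exp 12 (by norm_num)
  have hX_rev : X₁ = fun i => ε ^ (Fin.revPerm i : ℕ) := by
    funext i
    rw [hX, Fin.revPerm_apply, Fin.val_rev]
    congr 1
    omega
  have hvanish {j : ℕ} (hj₀ : 0 < j) (hj : j < 12) : eval X₁ (esymm (Fin 12) ℂ j) = 0 := by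
    rw [hX_rev]
    exact hprim.eval_esymm_pow_perm_eq_zero _ hj₀ hj
  refine ⟨hvanish (by norm_num) (by norm_num), hvanish (by norm_num) (by norm_num),
    hvanish (by norm_num) (by norm_num), ⟨blockPerm, ?_⟩, fun hmem => ?_⟩
  · simpa only [hX] using blockTraceZero_pow_blockPerm hprim
  · have hagree : ∀ g ∈ ({pRes 2, pRes 3} : Set _),
        g ⟨sepA, blockTraceZero_sepA⟩ = g ⟨sepB, blockTraceZero_sepB⟩ := by
      rintro g (rfl | rfl)
      exacts [eval_esymm_two_sepA_eq_sepB, eval_esymm_three_sepA_eq_sepB]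
    exact eval_esymm_five_sepA_ne_sepB (Algebra.apply_eq_apply_of_mem_adjoin hagree hmem)
end
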